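/- For every ε ∈ (0, 1/2), the inequality (1/2)·[1 − erf((1 − 2ε)/√(4·ε·(1−ε)))] < ε holds. -/

import Mathlib

/-!
With `s = 1 - 2ε` and `x = s / √(1 - s²)` one has `x / √(1 + x²) = s`, so the claim is
`x / √(1 + x²) < erf x` for `x > 0`. The difference `f` vanishes at `0` and at `∞`, and
`f' = (2/√π) e^{-x²} - (1 + x²)^{-3/2}` is positive exactly where
`x² - (3/2) log (1 + x²) < log (2/√π)`. The left side decreases on `[0, 1/√2]` and increases
afterwards, so `f'` changes sign once, from `+` to `-`: `f` rises and then falls to its limit `0`,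
hence stays positive on `(0, ∞)`.
-/

/-- The error function `erf z = (2/√π) · ∫_0^z exp(-t²) dt`. -/
noncomputable def erf (z : ℝ) : ℝ :=
  (2 / Real.sqrt Real.pi) * ∫ t in (0:ℝ)..z, Real.exp (-t ^ 2)

open Real Set Filter Topology MeasureTheory

lemma hasDerivAt_erf (x : ℝ) : HasDerivAt erf (2 / √π * exp (-x ^ 2)) x := by
  have hcont : Continuous fun t : ℝ => exp (-t ^ 2) := by fun_prop
  exact (intervalIntegral.integral_hasDerivAt_right (hcont.intervalIntegrable _ _)
    (hcont.stronglyMeasurableAtFilter _ _) hcont.continuousAt).const_mul _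

lemma erf_zero : erf 0 = 0 := by simp [erf]

lemma tendsto_erf_atTop : Tendsto erf atTop (𝓝 1) := by
  have hint : IntegrableOn (fun t : ℝ => exp (-t ^ 2)) (Ioi 0) := by
    simpa using (integrable_exp_neg_mul_sq one_pos).integrableOn
  have hhalf : ∫ t in Ioi (0:ℝ), exp (-t ^ 2) = √π / 2 := by
    simpa using integral_gaussian_Ioi 1
  have hπ : √π ≠ 0 := by positivity
  have h := ((intervalIntegral_tendsto_integral_Ioi 0 hint tendsto_id).const_mul (2 / √π))
  rwa [hhalf, div_mul_div_cancel₀ hπ, div_self two_ne_zero] at h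

lemma hasDerivAt_div_sqrt_one_add_sq (x : ℝ) :
    HasDerivAt (fun y => y / √(1 + y ^ 2)) ((1 + x ^ 2) * √(1 + x ^ 2))⁻¹ x := by
  have hpos : 0 < 1 + x ^ 2 := by positivity
  have hsqrt : HasDerivAt (fun y => √(1 + y ^ 2)) (x / √(1 + x ^ 2)) x := by
    convert ((hasDerivAt_pow 2 x).const_add 1).sqrt hpos.ne' using 1
    ring_nf
  refine ((hasDerivAt_id' x).div hsqrt (sqrt_pos.2 hpos).ne').congr_deriv ?_
  have hsq : √(1 + x ^ 2) ^ 2 = 1 + x ^ 2 := sq_sqrt hpos.le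
  field_simp
  linear_combination x ^ 2 * hsq

lemma tendsto_div_sqrt_one_add_sq_atTop : Tendsto (fun x => x / √(1 + x ^ 2)) atTop (𝓝 1) := by
  have hinv : Tendsto (fun x : ℝ => (1 + x ^ 2)⁻¹) atTop (𝓝 0) :=
    (tendsto_atTop_add_const_left _ 1 (tendsto_pow_atTop two_ne_zero)).inv_tendsto_atTop
  have h : Tendsto (fun x : ℝ => √(1 - (1 + x ^ 2)⁻¹)) atTop (𝓝 1) := by
    simpa [Function.comp_def] using
      (((continuous_const (y := (1 : ℝ))).sub continuous_id).sqrt.tendsto 0).comp hinv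
  refine h.congr' ?_
  filter_upwards [eventually_gt_atTop 0] with x hx
  rw [show 1 - (1 + x ^ 2)⁻¹ = x ^ 2 / (1 + x ^ 2) by field_simp; ring, sqrt_div (sq_nonneg x),
    sqrt_sq hx.le]

lemma div_sqrt_one_add_sq_div_sqrt_one_sub_sq {s : ℝ} (hs : s ^ 2 < 1) :
    s / √(1 - s ^ 2) / √(1 + (s / √(1 - s ^ 2)) ^ 2) = s := by
  have hpos : 0 < 1 - s ^ 2 := by linarith
  have hsq : √(1 - s ^ 2) ^ 2 = 1 - s ^ 2 := sq_sqrt hpos.le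
  have h : 1 + (s / √(1 - s ^ 2)) ^ 2 = (√(1 - s ^ 2))⁻¹ ^ 2 := by
    field_simp
    rw [hsq]
    ring
  rw [h, sqrt_sq (by positivity)]
  field_simp

lemma pos_of_hasDerivAt_pos_of_neg {f f' : ℝ → ℝ} {c x : ℝ} (hf : ∀ y, HasDerivAt f (f' y) y)
    (h0 : f 0 = 0) (hlim : Tendsto f atTop (𝓝 0)) (hc : 0 ≤ c) (hpos : ∀ y ∈ Ioo 0 c, 0 < f' y)
    (hneg : ∀ y ∈ Ioi c, f' y < 0) (hx : 0 < x) : 0 < f x := by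
  have hcont : Continuous f := continuous_iff_continuousAt.2 fun y => (hf y).continuousAt
  have hmono : StrictMonoOn f (Icc 0 c) :=
    strictMonoOn_of_hasDerivWithinAt_pos (convex_Icc 0 c) hcont.continuousOn
      (fun y _ => (hf y).hasDerivWithinAt) (by simpa only [interior_Icc] using hpos)
  have hanti : StrictAntiOn f (Ici c) :=
    strictAntiOn_of_hasDerivWithinAt_neg (convex_Ici c) hcont.continuousOn
      (fun y _ => (hf y).hasDerivWithinAt) (by simpa only [interior_Ici] using hneg)
  rcases le_or_gt x c with hxc | hcx
  · simpa only [h0] using hmono ⟨le_rfl, hc⟩ ⟨hx.le, hxc⟩ hx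
  · have hnonneg : 0 ≤ f (x + 1) :=
      le_of_tendsto hlim <| (eventually_gt_atTop (x + 1)).mono fun z hz =>
        (hanti (mem_Ici.2 (by linarith)) (mem_Ici.2 (by linarith)) hz).le
    exact hnonneg.trans_lt (hanti (mem_Ici.2 hcx.le) (mem_Ici.2 (by linarith)) (lt_add_one x))

noncomputable def erfGapExponent (x : ℝ) : ℝ := x ^ 2 - 3 / 2 * log (1 + x ^ 2)

lemma hasDerivAt_erfGapExponent (x : ℝ) :
    HasDerivAt erfGapExponent (x * (2 * x ^ 2 - 1) / (1 + x ^ 2)) x := by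
  have hpos : 0 < 1 + x ^ 2 := by positivity
  have hlog := ((hasDerivAt_pow 2 x).const_add 1).log hpos.ne'
  refine ((hasDerivAt_pow 2 x).sub (hlog.const_mul (3 / 2))).congr_deriv ?_
  field_simp
  ring

lemma continuous_erfGapExponent : Continuous erfGapExponent :=
  continuous_iff_continuousAt.2 fun x => (hasDerivAt_erfGapExponent x).continuousAt

lemma antitoneOn_erfGapExponent : AntitoneOn erfGapExponent (Icc 0 √(1 / 2)) := by
  refine antitoneOn_of_hasDerivWithinAt_nonpos (convex_Icc _ _)
    continuous_erfGapExponent.continuousOn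
    (fun x _ => (hasDerivAt_erfGapExponent x).hasDerivWithinAt) fun x hx => ?_
  rw [interior_Icc] at hx
  have hx2 : x ^ 2 < 1 / 2 := (lt_sqrt hx.1.le).1 hx.2
  exact div_nonpos_of_nonpos_of_nonneg (mul_nonpos_of_nonneg_of_nonpos hx.1.le (by linarith))
    (by positivity)

lemma strictMonoOn_erfGapExponent : StrictMonoOn erfGapExponent (Ici √(1 / 2)) := by
  refine strictMonoOn_of_hasDerivWithinAt_pos (convex_Ici _) continuous_erfGapExponent.continuousOn
    (fun x _ => (hasDerivAt_erfGapExponent x).hasDerivWithinAt) fun x hx => ?_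
  rw [interior_Ici] at hx
  have hx0 : 0 < x := (sqrt_nonneg _).trans_lt hx
  have hx2 : 1 / 2 < x ^ 2 := (sqrt_lt' hx0).1 hx
  exact div_pos (mul_pos hx0 (by linarith)) (by positivity)

lemma log_two_div_sqrt_pi_pos : 0 < log (2 / √π) := by
  have hπ : √π < 2 := (sqrt_lt' two_pos).2 (by linarith [pi_lt_four])
  exact log_pos ((one_lt_div (sqrt_pos.2 pi_pos)).2 hπ)

lemma log_two_div_sqrt_pi_lt_erfGapExponent_two : log (2 / √π) < erfGapExponent 2 := by
  have hπ : 1 ≤ √π := one_le_sqrt.2 (by linarith [pi_gt_three])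
  have hk : log (2 / √π) ≤ 1 := by
    have := log_le_sub_one_of_pos (show 0 < 2 / √π by positivity)
    have : 2 / √π ≤ 2 := div_le_self zero_le_two hπ
    linarith
  have h5 : log 5 < 2 := by
    rw [log_lt_iff_lt_exp (by norm_num), show (2 : ℝ) = 1 + 1 by norm_num, exp_add]
    nlinarith [exp_one_gt_d9]
  have hG : erfGapExponent 2 = 4 - 3 / 2 * log 5 := by norm_num [erfGapExponent]
  linarith

lemma exists_erfGapExponent_threshold : ∃ c, 0 ≤ c ∧
    (∀ y ∈ Ioo 0 c, erfGapExponent y < log (2 / √π)) ∧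
    ∀ y ∈ Ioi c, log (2 / √π) < erfGapExponent y := by
  set a := √(1 / 2)
  have ha : a ≤ 2 := (sqrt_le_left (by norm_num)).2 (by norm_num)
  have hle_zero : ∀ y ∈ Icc 0 a, erfGapExponent y ≤ 0 := fun y hy => by
    simpa [erfGapExponent] using antitoneOn_erfGapExponent ⟨le_rfl, sqrt_nonneg _⟩ hy hy.1
  obtain ⟨c, hc, hGc⟩ := intermediate_value_Icc ha continuous_erfGapExponent.continuousOn
    ⟨(hle_zero a ⟨sqrt_nonneg _, le_rfl⟩).trans log_two_div_sqrt_pi_pos.le,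
      log_two_div_sqrt_pi_lt_erfGapExponent_two.le⟩
  refine ⟨c, (sqrt_nonneg _).trans hc.1, fun y hy => ?_, fun y hy => ?_⟩
  · rcases le_or_gt y a with hya | hay
    · exact (hle_zero y ⟨hy.1.le, hya⟩).trans_lt log_two_div_sqrt_pi_pos
    · exact hGc ▸ strictMonoOn_erfGapExponent hay.le hc.1 hy.2
  · exact hGc ▸ strictMonoOn_erfGapExponent hc.1 (hc.1.trans hy.le) hy

lemma hasDerivAt_erf_sub_div_sqrt_one_add_sq (x : ℝ) :
    HasDerivAt (fun y => erf y - y / √(1 + y ^ 2))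
      (exp (log (2 / √π) - x ^ 2) - exp (-(3 / 2) * log (1 + x ^ 2))) x := by
  have hpos : 0 < 1 + x ^ 2 := by positivity
  refine ((hasDerivAt_erf x).sub (hasDerivAt_div_sqrt_one_add_sq x)).congr_deriv ?_
  have hpow : exp (-(3 / 2) * log (1 + x ^ 2)) = ((1 + x ^ 2) * √(1 + x ^ 2))⁻¹ := by
    rw [show -(3 / 2) * log (1 + x ^ 2) = -(log (1 + x ^ 2) + log (1 + x ^ 2) / 2) by ring,
      exp_neg, exp_add, exp_half, exp_log hpos]
  rw [hpow, sub_eq_add_neg (log _), exp_add, exp_log (by positivity)]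

lemma div_sqrt_one_add_sq_lt_erf {x : ℝ} (hx : 0 < x) : x / √(1 + x ^ 2) < erf x := by
  obtain ⟨c, hc, hlt, hgt⟩ := exists_erfGapExponent_threshold
  refine sub_pos.1 <| pos_of_hasDerivAt_pos_of_neg (f := fun y => erf y - y / √(1 + y ^ 2))
    hasDerivAt_erf_sub_div_sqrt_one_add_sq (by simp [erf_zero])
    (by simpa using tendsto_erf_atTop.sub tendsto_div_sqrt_one_add_sq_atTop) hc
    (fun y hy => ?_) (fun y hy => ?_) hx
  · have hGy := hlt y hy
    rw [erfGapExponent] at hGy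
    rw [sub_pos, exp_lt_exp]
    linarith
  · have hGy := hgt y hy
    rw [erfGapExponent] at hGy
    rw [sub_neg, exp_lt_exp]
    linarith

/-- For every `ε ∈ (0, 1/2)`, `(1/2)·[1 - erf((1 - 2ε)/√(4·ε·(1-ε)))] < ε`. -/
theorem Pupper_two_lt (ε : ℝ) (hε : ε ∈ Set.Ioo (0 : ℝ) (1 / 2)) :
    (1 / 2) * (1 - erf ((1 - 2 * ε) / Real.sqrt (4 * ε * (1 - ε)))) < ε := by
  obtain ⟨hε0, hε1⟩ := hε
  have hs : (1 - 2 * ε) ^ 2 < 1 := by nlinarith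
  have hx : 0 < (1 - 2 * ε) / √(1 - (1 - 2 * ε) ^ 2) :=
    div_pos (by linarith) (sqrt_pos.2 (by linarith))
  have h := div_sqrt_one_add_sq_lt_erf hx
  rw [div_sqrt_one_add_sq_div_sqrt_one_sub_sq hs,
    show 1 - (1 - 2 * ε) ^ 2 = 4 * ε * (1 - ε) by ring] at h
  linarith
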